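/- arXiv:2407.03170 — 2 statements merged into one kernel-verified Lean document; each statement's English description precedes it below -/
import Mathlib

section
/- Let p be an odd prime, q = p^m with m ≥ 2, 0 < i < m, r = p^i. With t(x) = x^q − x, L(x) = 8^{-1}(x^r − x), and F(x) = L(t(x)^2) + 2^{-1} x^2 over F_{q^2}, and M(x) = 3x − x^r + x^q + x^{qr}, one has the polynomial identity 2·M(F(x)) = 2x^2 + 2x^{q+1} − 2x^{r(q+1)} + 2x^{2qr} for all x ∈ F_{q^2}. -/
/-!
The map `M(y) = 3y - y^r + y^q + y^{qr}` is a sum of Frobenius powers, hence additive and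
`𝔽_p`-linear, and it multiplies every `y` with `y^q = y` by `4`. On `𝔽_{q²}` the element
`v = t(x)^2` satisfies `v^q = (-t(x))^2 = v`, and so does `w = v^r`. Since
`F(x) = 8⁻¹(w - v) + 2⁻¹x²`, this gives `2·M(F(x)) = (w - v) + M(x²)`, which expands to the
quadrinomial.
-/

theorem pow_pow_eq_self_of_pow_eq_self {M : Type*} [Monoid M] {c : M} {n : ℕ} (hc : c ^ n = c)
    (k : ℕ) : c ^ n ^ k = c := by
  induction k with
  | zero => simp
  | succ k ih => rw [pow_succ, pow_mul, ih, hc]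

theorem inv_ofNat_pow_expChar {K : Type*} [Field K] (p : ℕ) [ExpChar K p]
    (n : ℕ) [n.AtLeastTwo] :
    (OfNat.ofNat n : K)⁻¹ ^ p = (OfNat.ofNat n : K)⁻¹ := by
  rw [← frobenius_def, map_inv₀, map_ofNat]

theorem GaloisField.pow_pow_eq_self (p : ℕ) [Fact p.Prime] {m : ℕ} (hm : m ≠ 0)
    (y : GaloisField p (2 * m)) : (y ^ p ^ m) ^ p ^ m = y := by
  have : Fintype (GaloisField p (2 * m)) := Fintype.ofFinite _
  rw [← pow_mul, ← pow_add, ← two_mul, ← GaloisField.card p (2 * m) (by omega),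
    Nat.card_eq_fintype_card, FiniteField.pow_card]

section Linearized

variable {K : Type*} [Field K] (p m i : ℕ)

def linearizedM (y : K) : K := 3 * y - y ^ p ^ i + y ^ p ^ m + y ^ (p ^ m * p ^ i)

theorem linearizedM_of_pow_eq_self {v : K} (hv : v ^ p ^ m = v) :
    linearizedM p m i v = 4 * v := by
  rw [linearizedM, pow_mul, hv]
  ring

theorem linearizedM_mul_of_pow_eq_self {c : K} (hc : c ^ p = c) (a : K) :
    linearizedM p m i (c * a) = c * linearizedM p m i a := by
  simp only [linearizedM, ← pow_add, mul_pow, pow_pow_eq_self_of_pow_eq_self hc]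
  ring

variable [ExpChar K p]

theorem linearizedM_add (a b : K) :
    linearizedM p m i (a + b) = linearizedM p m i a + linearizedM p m i b := by
  simp only [linearizedM, ← pow_add, add_pow_expChar_pow]
  ring

theorem linearizedM_sub (a b : K) :
    linearizedM p m i (a - b) = linearizedM p m i a - linearizedM p m i b := by
  simp only [linearizedM, ← pow_add, sub_pow_expChar_pow]
  ring

variable {p m}

theorem pow_sub_self_sq_pow_eq_self (hq : ∀ y : K, (y ^ p ^ m) ^ p ^ m = y) (x : K) :
    ((x ^ p ^ m - x) ^ 2) ^ p ^ m = (x ^ p ^ m - x) ^ 2 := by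
  rw [← pow_mul, mul_comm, pow_mul, sub_pow_expChar_pow, hq]
  ring

theorem two_mul_linearizedM_eq (h2 : (2 : K) ≠ 0) (hq : ∀ y : K, (y ^ p ^ m) ^ p ^ m = y)
    (x : K) :
    2 * linearizedM p m i ((8 : K)⁻¹ * (((x ^ p ^ m - x) ^ 2) ^ p ^ i - (x ^ p ^ m - x) ^ 2)
        + (2 : K)⁻¹ * x ^ 2)
      = 2 * x ^ 2 + 2 * x ^ (p ^ m + 1)
          - 2 * x ^ (p ^ i * (p ^ m + 1)) + 2 * x ^ (2 * p ^ m * p ^ i) := by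
  set v := (x ^ p ^ m - x) ^ 2 with hv
  have hvq : v ^ p ^ m = v := pow_sub_self_sq_pow_eq_self hq x
  have hwq : (v ^ p ^ i) ^ p ^ m = v ^ p ^ i := by rw [← pow_mul, mul_comm, pow_mul, hvq]
  have h8 : (8 : K) = 2 ^ 3 := by norm_num
  have hsplit : 2 * linearizedM p m i ((8 : K)⁻¹ * (v ^ p ^ i - v) + (2 : K)⁻¹ * x ^ 2)
      = v ^ p ^ i - v + linearizedM p m i (x ^ 2) := by
    rw [linearizedM_add, linearizedM_mul_of_pow_eq_self _ _ _ (inv_ofNat_pow_expChar p 8),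
      linearizedM_mul_of_pow_eq_self _ _ _ (inv_ofNat_pow_expChar p 2), linearizedM_sub,
      linearizedM_of_pow_eq_self _ _ _ hvq, linearizedM_of_pow_eq_self _ _ _ hwq, h8]
    field_simp
    ring
  rw [hsplit, hv, linearizedM, ← pow_mul _ 2, mul_comm 2, pow_mul, sub_pow_expChar_pow]
  ring

end Linearized

theorem two_M_F_eq_quadrinomial_general (p : ℕ) [Fact p.Prime] (hp : Odd p)
    (m i : ℕ) (hm : 2 ≤ m)
    (t L F M : GaloisField p (2 * m) → GaloisField p (2 * m))
    (ht : ∀ x, t x = x ^ (p ^ m) - x)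
    (hL : ∀ x, L x = (8 : GaloisField p (2 * m))⁻¹ * (x ^ (p ^ i) - x))
    (hF : ∀ x, F x = L ((t x) ^ 2) + (2 : GaloisField p (2 * m))⁻¹ * x ^ 2)
    (hM : ∀ x, M x = 3 * x - x ^ (p ^ i) + x ^ (p ^ m) + x ^ (p ^ m * p ^ i)) :
    ∀ x : GaloisField p (2 * m),
      2 * M (F x)
        = 2 * x ^ 2 + 2 * x ^ (p ^ m + 1)
            - 2 * x ^ (p ^ i * (p ^ m + 1)) + 2 * x ^ (2 * p ^ m * p ^ i) := by
  intro x
  have h2 : (2 : GaloisField p (2 * m)) ≠ 0 := Ring.two_ne_zero <| by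
    rw [ringChar.eq (GaloisField p (2 * m)) p]
    exact hp.ne_two_of_dvd_nat dvd_rfl
  rw [hM, hF, hL, ht]
  exact two_mul_linearizedM_eq i h2 (GaloisField.pow_pow_eq_self p (by omega)) x

/-- The identity `2·M(F(x)) = 2x^2 + 2x^{q+1} - 2x^{r(q+1)} + 2x^{2qr}` over `F_{q^2}`,
where `q = p^m`, `r = p^i`, `t(x) = x^q - x`, `L(x) = 8⁻¹(x^r - x)`,
`F(x) = L(t(x)^2) + 2⁻¹ x^2`, and `M(x) = 3x - x^r + x^q + x^{qr}`. -/
theorem two_M_F_eq_quadrinomial (p : ℕ) [Fact p.Prime] (hp : Odd p)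
    (m i : ℕ) (hm : 2 ≤ m) (hi1 : 0 < i) (hi2 : i < m)
    (t L F M : GaloisField p (2 * m) → GaloisField p (2 * m))
    (ht : ∀ x, t x = x ^ (p ^ m) - x)
    (hL : ∀ x, L x = (8 : GaloisField p (2 * m))⁻¹ * (x ^ (p ^ i) - x))
    (hF : ∀ x, F x = L ((t x) ^ 2) + (2 : GaloisField p (2 * m))⁻¹ * x ^ 2)
    (hM : ∀ x, M x = 3 * x - x ^ (p ^ i) + x ^ (p ^ m) + x ^ (p ^ m * p ^ i)) :
    ∀ x : GaloisField p (2 * m),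
      2 * M (F x)
        = 2 * x ^ 2 + 2 * x ^ (p ^ m + 1)
            - 2 * x ^ (p ^ i * (p ^ m + 1)) + 2 * x ^ (2 * p ^ m * p ^ i) :=
  two_M_F_eq_quadrinomial_general p hp m i hm t L F M ht hL hF hM
end

section
/- Let n ≥ 5 be odd and a ∈ F_{3^n} nonzero. Then F(x) = x^{10} + a x^6 − a^2 x^2 is planar over F_{3^n}. -/
/-!
In characteristic 3 the derivative `D_b F(x) = F(x + b) - F(x)` of `F(x) = x^10 + a x^6 - a^2 x^2`
is the additive polynomial `L_b(x) = b x^9 - a b^3 x^3 + (b^9 + a^2 b) x` plus the constant `F(b)`,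
so planarity amounts to `L_b` having trivial kernel. For `z ≠ 0`, `L_b(z) = 0` means
`z^8 - a b^2 z^2 + b^8 + a^2 = 0`, which in characteristic 3 is `(a + b^2 z^2)^2 = -(z^4 + b^4)^2`;
so `-1` is the square of `(a + b^2 z^2) / (z^4 + b^4)`, or of `z^2 / b^2` when `z^4 + b^4 = 0`.
But `-1` is not a square in `F_{3^n}` for odd `n`, since `3^n ≡ 3 mod 4`.
-/

instance : Fact (Nat.Prime 3) := ⟨by norm_num⟩

theorem GaloisField.not_isSquare_neg_one {p : ℕ} [Fact p.Prime] (hp : p % 4 = 3) {n : ℕ}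
    (hn : Odd n) : ¬IsSquare (-1 : GaloisField p n) := by
  have := Fintype.ofFinite (GaloisField p n)
  rw [FiniteField.isSquare_neg_one_iff, ← Nat.card_eq_fintype_card,
    GaloisField.card p n hn.pos.ne', not_not, Nat.pow_mod, hp]
  obtain ⟨k, rfl⟩ := hn
  rw [pow_succ, pow_mul, Nat.mul_mod, Nat.pow_mod]
  norm_num

theorem isSquare_neg_one_of_sq_eq_neg_sq {K : Type*} [Field K] {u w : K} (hw : w ≠ 0)
    (h : u ^ 2 = -w ^ 2) : IsSquare (-1 : K) :=
  ⟨u / w, by field_simp; linear_combination -h⟩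

def tst {R : Type*} [CommRing R] (a x : R) : R := x ^ 10 + a * x ^ 6 - a ^ 2 * x ^ 2

section CharThree

variable {R : Type*} [CommRing R] [CharP R 3]

theorem add_pow_nine (x y : R) : (x + y) ^ 9 = x ^ 9 + y ^ 9 :=
  add_pow_char_pow (p := 3) (n := 2) x y

@[simps]
def tstLinear (a b : R) : R →+ R where
  toFun x := b * x ^ 9 - a * b ^ 3 * x ^ 3 + (b ^ 9 + a ^ 2 * b) * x
  map_zero' := by ring
  map_add' x y := by simp only [add_pow_nine, add_pow_char]; ring

theorem tst_add_sub_tst (a b x : R) :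
    tst a (x + b) - tst a x = tstLinear a b x + tst a b := by
  have h3 : (3 : R) = 0 := CharP.ofNat_eq_zero R 3
  have h10 : (x + b) ^ 10 = (x ^ 9 + b ^ 9) * (x + b) := by rw [← add_pow_nine]; ring
  have h6 : (x + b) ^ 6 = (x ^ 3 + b ^ 3) ^ 2 := by rw [← add_pow_char]; ring
  simp only [tst, tstLinear_apply, h10, h6]
  linear_combination (a * x ^ 3 * b ^ 3 - a ^ 2 * x * b) * h3

end CharThree

section FieldCharThree

variable {K : Type*} [Field K] [CharP K 3]

theorem isSquare_neg_one_of_tstLinear_eq_zero {a b z : K} (hb : b ≠ 0) (hz : z ≠ 0)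
    (h : tstLinear a b z = 0) : IsSquare (-1 : K) := by
  rw [tstLinear_apply] at h
  have h3 : (3 : K) = 0 := CharP.ofNat_eq_zero K 3
  have hquot : z ^ 8 - a * b ^ 2 * z ^ 2 + (b ^ 8 + a ^ 2) = 0 := by
    refine (mul_eq_zero.mp ?_).resolve_left (mul_ne_zero hb hz)
    linear_combination h
  have hsq : (a + b ^ 2 * z ^ 2) ^ 2 = -(z ^ 4 + b ^ 4) ^ 2 := by
    linear_combination hquot + (a * b ^ 2 * z ^ 2 + z ^ 4 * b ^ 4) * h3
  by_cases hw : z ^ 4 + b ^ 4 = 0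
  · exact isSquare_neg_one_of_sq_eq_neg_sq (u := z ^ 2) (pow_ne_zero 2 hb)
      (by linear_combination hw)
  · exact isSquare_neg_one_of_sq_eq_neg_sq hw hsq

theorem tstLinear_injective (hK : ¬IsSquare (-1 : K)) (a : K) {b : K} (hb : b ≠ 0) :
    Function.Injective (tstLinear a b) :=
  (injective_iff_map_eq_zero _).mpr fun _ hz =>
    by_contra fun hz0 => hK (isSquare_neg_one_of_tstLinear_eq_zero hb hz0 hz)

end FieldCharThree

theorem TST_planar_general (n : ℕ) (hodd : Odd n)
    (a : GaloisField 3 n) :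
    ∀ b : GaloisField 3 n, b ≠ 0 →
      Function.Bijective
        (fun x : GaloisField 3 n =>
          ((x + b) ^ 10 + a * (x + b) ^ 6 - a ^ 2 * (x + b) ^ 2)
            - (x ^ 10 + a * x ^ 6 - a ^ 2 * x ^ 2)) := by
  intro b hb
  refine Finite.injective_iff_bijective.mp ?_
  change Function.Injective fun x => tst a (x + b) - tst a x
  simp only [tst_add_sub_tst]
  exact (add_left_injective (tst a b)).comp
    (tstLinear_injective (GaloisField.not_isSquare_neg_one rfl hodd) a hb)

/-- The Ten-Six-Two family: for odd `n ≥ 5` and nonzero `a`,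
`x^10 + a x^6 - a^2 x^2` is planar over `F_{3^n}`. -/
theorem TST_planar (n : ℕ) (hn : 5 ≤ n) (hodd : Odd n)
    (a : GaloisField 3 n) (ha : a ≠ 0) :
    ∀ b : GaloisField 3 n, b ≠ 0 →
      Function.Bijective
        (fun x : GaloisField 3 n =>
          ((x + b) ^ 10 + a * (x + b) ^ 6 - a ^ 2 * (x + b) ^ 2)
            - (x ^ 10 + a * x ^ 6 - a ^ 2 * x ^ 2)) :=
  TST_planar_general n hodd a
end
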